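/- Let p be a prime. Then U_p^2 = Q^{p^3 - p^2 - p} A Q^{-1} A^p Q A^{-1} Q A^{-p}, where A = [[1,0],[1,1]], Q = [[1,(p+1)/p],[0,1]], U_p = [[p,0],[0,1/p]]. In particular U_p^2 lies in the subgroup generated by A and Q. -/

import Mathlib

/-! `n ↦ A ^ n = [[1,0],[n,1]]` and `n ↦ Q_q ^ n = Q_{n q}` are one-parameter unipotent subgroups,
so the word is a product of eight elementary matrices, and the identity is a 2 × 2 computation
that holds for every nonzero rational `p`. -/

abbrev SL2Q := Matrix.SpecialLinearGroup (Fin 2) ℚ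

/-- A = [[1,0],[1,1]] -/
def matA : SL2Q := ⟨!![1,0;1,1], by norm_num [Matrix.det_fin_two_of]⟩
/-- B = [[0,1],[-1,0]] -/
def matB : SL2Q := ⟨!![0,1;-1,0], by norm_num [Matrix.det_fin_two_of]⟩
/-- Q_q = [[1,q],[0,1]] -/
def matQ (q : ℚ) : SL2Q := ⟨!![1,q;0,1], by norm_num [Matrix.det_fin_two_of]⟩
/-- U_p = [[p,0],[0,1/p]] -/
def matU (p : ℚ) (hp : p ≠ 0) : SL2Q := ⟨!![p,0;0,p⁻¹], by rw [Matrix.det_fin_two_of]; field_simp; norm_num⟩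
/-- lower unipotent [[1,0],[x,1]] -/
def matL (x : ℚ) : SL2Q := ⟨!![1,0;x,1], by norm_num [Matrix.det_fin_two_of]⟩

@[simp] lemma coe_matQ (a : ℚ) : (matQ a : Matrix (Fin 2) (Fin 2) ℚ) = !![1, a; 0, 1] := rfl

@[simp] lemma coe_matL (a : ℚ) : (matL a : Matrix (Fin 2) (Fin 2) ℚ) = !![1, 0; a, 1] := rfl

@[simp] lemma coe_matU (x : ℚ) (hx : x ≠ 0) :
    (matU x hx : Matrix (Fin 2) (Fin 2) ℚ) = !![x, 0; 0, x⁻¹] := rfl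

def matQHom : Multiplicative ℚ →* SL2Q where
  toFun a := matQ a.toAdd
  map_one' := by ext i j; fin_cases i <;> fin_cases j <;> simp
  map_mul' a b := by ext i j; fin_cases i <;> fin_cases j <;> simp [add_comm]

def matLHom : Multiplicative ℚ →* SL2Q where
  toFun a := matL a.toAdd
  map_one' := by ext i j; fin_cases i <;> fin_cases j <;> simp
  map_mul' a b := by ext i j; fin_cases i <;> fin_cases j <;> simp

lemma matQ_zpow (a : ℚ) (n : ℤ) : matQ a ^ n = matQ (n * a) := by
  rw [← zsmul_eq_mul]
  exact (map_zpow matQHom (.ofAdd a) n).symm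

lemma matQ_inv (a : ℚ) : (matQ a)⁻¹ = matQ (-a) := by
  rw [← zpow_neg_one, matQ_zpow, Int.cast_neg, Int.cast_one, neg_one_mul]

lemma matL_zpow (a : ℚ) (n : ℤ) : matL a ^ n = matL (n * a) := by
  rw [← zsmul_eq_mul]
  exact (map_zpow matLHom (.ofAdd a) n).symm

lemma matA_eq_matL_one : matA = matL 1 := by
  ext i j; fin_cases i <;> fin_cases j <;> rfl

lemma matA_zpow (n : ℤ) : matA ^ n = matL n := by
  rw [matA_eq_matL_one, matL_zpow, mul_one]

lemma matA_pow (n : ℕ) : matA ^ n = matL n := by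
  rw [← zpow_natCast, matA_zpow, Int.cast_natCast]

lemma matA_inv : matA⁻¹ = matL (-1) := by
  rw [← zpow_neg_one, matA_zpow, Int.cast_neg, Int.cast_one]

lemma matU_sq_eq_word (x : ℚ) (hx : x ≠ 0) :
    matU x hx ^ 2 =
      matQ ((x ^ 3 - x ^ 2 - x) * ((x + 1) / x)) * matL 1 * matQ (-((x + 1) / x)) * matL x *
        matQ ((x + 1) / x) * matL (-1) * matQ ((x + 1) / x) * matL (-x) := by
  ext i j
  simp only [Matrix.SpecialLinearGroup.coe_mul, coe_matU, coe_matL, coe_matQ, pow_two,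
    Matrix.mul_fin_two]
  fin_cases i <;> fin_cases j <;> (simp; field_simp; ring)

theorem stmt14 (p : ℕ) (hp : p.Prime) :
    (matU p (Nat.cast_ne_zero.mpr hp.ne_zero))^2 =
      (matQ (((p:ℚ)+1)/p))^((p:ℤ)^3 - (p:ℤ)^2 - (p:ℤ)) * matA * (matQ (((p:ℚ)+1)/p))⁻¹ *
      matA^p * matQ (((p:ℚ)+1)/p) * matA⁻¹ * matQ (((p:ℚ)+1)/p) * matA^(-(p:ℤ)) ∧
    (matU p (Nat.cast_ne_zero.mpr hp.ne_zero))^2 ∈ Subgroup.closure {matA, matQ (((p:ℚ)+1)/p)} := by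
  set Q := matQ (((p:ℚ)+1)/p)
  have hword : (matU p (Nat.cast_ne_zero.mpr hp.ne_zero))^2 =
      Q^((p:ℤ)^3 - (p:ℤ)^2 - (p:ℤ)) * matA * Q⁻¹ * matA^p * Q * matA⁻¹ * Q * matA^(-(p:ℤ)) := by
    rw [matU_sq_eq_word, matQ_zpow, matQ_inv, matA_pow, matA_inv, matA_zpow, matA_eq_matL_one]
    push_cast
    rfl
  refine ⟨hword, hword ▸ ?_⟩
  have hA : matA ∈ Subgroup.closure {matA, Q} := Subgroup.subset_closure (by simp)
  have hQ : Q ∈ Subgroup.closure {matA, Q} := Subgroup.subset_closure (by simp)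
  apply_rules [Subgroup.mul_mem, Subgroup.inv_mem, Subgroup.pow_mem, Subgroup.zpow_mem]
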